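/- Let H1, H2, H3, H4 be subgroups of a finite group G with H4 ≤ H3. Then the Ingleton inequality holds for (H1, H2, H3, H4). -/

import Mathlib

/-! Writing `|A| = |A ⊓ C| · [A : A ⊓ C]`, the inequality `|A ⊓ B| |A ⊓ C| ≤ |A| |A ⊓ B ⊓ C|` says
that the index of `C` in `A ⊓ B` is at most its index in `A`. Since `H4 ≤ H3`, the Ingleton
inequality is the product of two instances of this, `|H1 ⊓ H2| |H1 ⊓ H3| ≤ |H1| |H1 ⊓ H2 ⊓ H3|`
and `|H1 ⊓ H4| |H2 ⊓ H4| ≤ |H4| |H1 ⊓ H2 ⊓ H4|`, with the trivial `|H2 ⊓ H3| ≤ |H2|`. -/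

namespace Subgroup

variable {G : Type*} [Group G]

theorem card_inf_mul_relIndex (H K : Subgroup G) :
    Nat.card (H ⊓ K : Subgroup G) * H.relIndex K = Nat.card K := by
  rw [← relIndex_bot_left, ← relIndex_bot_left, ← inf_relIndex_right H K]
  exact relIndex_mul_relIndex _ _ _ bot_le inf_le_right

theorem card_inf_mul_card_inf_le (A B C : Subgroup G) [Finite A] :
    Nat.card (A ⊓ B : Subgroup G) * Nat.card (A ⊓ C : Subgroup G) ≤
      Nat.card A * Nat.card (A ⊓ B ⊓ C : Subgroup G) := by
  have hAB := card_inf_mul_relIndex C (A ⊓ B)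
  have hA := card_inf_mul_relIndex C A
  have hle : C.relIndex (A ⊓ B) ≤ C.relIndex A :=
    relIndex_le_of_le_right inf_le_left FiniteIndex.index_ne_zero
  rw [inf_comm C] at hAB hA
  calc _ = Nat.card (A ⊓ B ⊓ C : Subgroup G) * C.relIndex (A ⊓ B) *
          Nat.card (A ⊓ C : Subgroup G) := by
        rw [hAB]
    _ ≤ Nat.card (A ⊓ B ⊓ C : Subgroup G) * C.relIndex A * Nat.card (A ⊓ C : Subgroup G) := by
        gcongr
    _ = Nat.card A * Nat.card (A ⊓ B ⊓ C : Subgroup G) := by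
        rw [← hA]; ring

end Subgroup

theorem stmt11 {G : Type*} [Group G] [Finite G] (H1 H2 H3 H4 : Subgroup G)
    (h : H4 ≤ H3) :
    Nat.card (H1 : Subgroup G) * Nat.card (H2 : Subgroup G) * Nat.card (H3 ⊓ H4 : Subgroup G) * Nat.card (H1 ⊓ H2 ⊓ H3 : Subgroup G) * Nat.card (H1 ⊓ H2 ⊓ H4 : Subgroup G) ≥ Nat.card (H1 ⊓ H2 : Subgroup G) * Nat.card (H1 ⊓ H3 : Subgroup G) * Nat.card (H1 ⊓ H4 : Subgroup G) * Nat.card (H2 ⊓ H3 : Subgroup G) * Nat.card (H2 ⊓ H4 : Subgroup G) := by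
  have h1 := Subgroup.card_inf_mul_card_inf_le H1 H2 H3
  have h4 := Subgroup.card_inf_mul_card_inf_le H4 H1 H2
  have h2 : Nat.card (H2 ⊓ H3 : Subgroup G) ≤ Nat.card H2 := Subgroup.card_le_of_le inf_le_left
  rw [inf_comm H4 H1, inf_comm H4 H2, show H1 ⊓ H4 ⊓ H2 = H1 ⊓ H2 ⊓ H4 by ac_rfl] at h4
  rw [inf_eq_right.mpr h]
  calc _ = (Nat.card (H1 ⊓ H2 : Subgroup G) * Nat.card (H1 ⊓ H3 : Subgroup G)) *
          Nat.card (H2 ⊓ H3 : Subgroup G) *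
          (Nat.card (H1 ⊓ H4 : Subgroup G) * Nat.card (H2 ⊓ H4 : Subgroup G)) := by ring
    _ ≤ (Nat.card H1 * Nat.card (H1 ⊓ H2 ⊓ H3 : Subgroup G)) * Nat.card H2 *
          (Nat.card H4 * Nat.card (H1 ⊓ H2 ⊓ H4 : Subgroup G)) := by gcongr
    _ = _ := by ring
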